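/- arXiv:2410.02822 — 3 statements merged into one kernel-verified Lean document; each statement's English description precedes it below -/
import Mathlib

section
/- Let K : [0,1]² → ℝ be bounded, and for each ε > 0 assume there is an open set A_ε ⊆ [0,1]² on which K is uniformly continuous and such that, setting B^u_ε = {v : (u,v) ∈ A_ε}, one has λ((B^u_ε)^c) ≤ ε for all u. Define K̃^N(u,v) := K(⌊Nu⌋/N, ⌊Nv⌋/N). Then ∫₀¹∫₀¹ |K̃^N(u,v) − K(u,v)| dv du → 0 as N → ∞; in particular ‖K̃^N − K‖_{∞→1} → 0. -/
/-!
The integrand `|K (⌊N u⌋/N, ⌊N v⌋/N) - K (u, v)|` is bounded by `2 * CK`. At a point `p` of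
`A_ε = U ∩ [0,1]²` it tends to `0`: the grid points approach `p` from inside `[0,1]²`, hence
eventually lie in the relatively open set `A_ε`, on which `K` is continuous. By Fubini the
section condition gives `λ²([0,1]² \ A_ε) ≤ ε`, so the integrand tends to `0` almost everywhere
on `[0,1]²`, and dominated convergence concludes.
-/

open MeasureTheory Filter Topology Set

noncomputable def gridFloor (N : ℕ) (u : ℝ) : ℝ := ⌊(N : ℝ) * u⌋ / N

lemma gridFloor_mem_Icc (N : ℕ) {u : ℝ} (hu : u ∈ Icc (0 : ℝ) 1) :
    gridFloor N u ∈ Icc (0 : ℝ) 1 := by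
  rcases Nat.eq_zero_or_pos N with rfl | hN
  · simp [gridFloor]
  have hN : (0 : ℝ) < N := Nat.cast_pos.2 hN
  refine ⟨div_nonneg (Int.cast_nonneg (Int.floor_nonneg.2 (by nlinarith [hu.1]))) hN.le, ?_⟩
  rw [gridFloor, div_le_one hN]
  nlinarith [Int.floor_le ((N : ℝ) * u), hu.2]

lemma gridFloor_mem_Ioc {N : ℕ} (hN : 0 < N) (u : ℝ) : gridFloor N u ∈ Ioc (u - 1 / N) u := by
  have hN : (0 : ℝ) < N := Nat.cast_pos.2 hN
  rw [gridFloor, mem_Ioc, lt_div_iff₀ hN, div_le_iff₀ hN, sub_mul, one_div_mul_cancel hN.ne']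
  constructor <;> linarith [Int.floor_le ((N : ℝ) * u), Int.lt_floor_add_one ((N : ℝ) * u)]

lemma tendsto_gridFloor (u : ℝ) : Tendsto (fun N : ℕ => gridFloor N u) atTop (𝓝 u) := by
  have h : Tendsto (fun N : ℕ => u - 1 / (N : ℝ)) atTop (𝓝 u) := by
    simpa using (tendsto_const_nhds (x := u)).sub tendsto_one_div_atTop_nhds_zero_nat
  have hN : ∀ᶠ N : ℕ in atTop, 0 < N := eventually_gt_atTop 0
  exact tendsto_of_tendsto_of_tendsto_of_le_of_le' h tendsto_const_nhds
    (hN.mono fun N hN => (gridFloor_mem_Ioc hN u).1.le)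
    (hN.mono fun N hN => (gridFloor_mem_Ioc hN u).2)

lemma measurable_gridFloor (N : ℕ) : Measurable (gridFloor N) :=
  (measurable_from_top.comp (measurable_const.mul measurable_id).floor).div_const _

lemma tendsto_comp_of_continuousOn_inter_isOpen {X Y ι : Type*} [TopologicalSpace X]
    [TopologicalSpace Y] {l : Filter ι} {f : X → Y} {U s : Set X} (hU : IsOpen U)
    (hf : ContinuousOn f (U ∩ s)) {q : ι → X} {p : X} (hp : p ∈ U ∩ s)
    (hq : Tendsto q l (𝓝 p)) (hqs : ∀ i, q i ∈ s) : Tendsto (f ∘ q) l (𝓝 (f p)) := by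
  refine (hf p hp).tendsto.comp (tendsto_nhdsWithin_iff.2 ⟨hq, ?_⟩)
  filter_upwards [hq (hU.mem_nhds hp.1)] with i hi using ⟨hi, hqs i⟩

lemma prod_le_of_sections_le {α β : Type*} [MeasurableSpace α] [MeasurableSpace β]
    {μ : Measure α} {ν : Measure β} [SFinite ν] {s : Set (α × β)} {t : Set α}
    (hs : MeasurableSet s) (ht : MeasurableSet t) (hst : s ⊆ t ×ˢ univ) {c : ENNReal}
    (h : ∀ u ∈ t, ν (Prod.mk u ⁻¹' s) ≤ c) : μ.prod ν s ≤ μ t * c := by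
  have hsupp : (fun u => ν (Prod.mk u ⁻¹' s)).support ⊆ t := fun u hu => by
    by_contra hut
    exact hu (measure_mono_null (fun v hv => hut (hst hv).1) measure_empty)
  rw [Measure.prod_apply hs, ← setLIntegral_eq_of_support_subset hsupp, mul_comm,
    ← setLIntegral_const]
  exact setLIntegral_mono' ht h

lemma ae_restrict_of_forall_measure_diff_le {α : Type*} [MeasurableSpace α] {μ : Measure α}
    {s : Set α} (hs : MeasurableSet s) {P : α → Prop}
    (h : ∀ ε > (0 : ℝ), μ (s \ {x | P x}) ≤ ENNReal.ofReal ε) : ∀ᵐ x ∂μ.restrict s, P x := by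
  rw [ae_restrict_iff' hs, ae_iff]
  refine nonpos_iff_eq_zero.1 (ENNReal.le_of_forall_pos_le_add fun ε hε _ => ?_)
  rw [zero_add, ← ENNReal.ofReal_coe_nnreal]
  exact (measure_mono fun x hx => Classical.not_imp.1 hx).trans (h ε hε)

lemma tendsto_abs_sub_gridFloor {k : ℝ × ℝ → ℝ} {U : Set (ℝ × ℝ)} (hU : IsOpen U)
    (hk : ContinuousOn k (U ∩ Icc 0 1 ×ˢ Icc 0 1)) {p : ℝ × ℝ} (hp : p ∈ U ∩ Icc 0 1 ×ˢ Icc 0 1) :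
    Tendsto (fun N => |k (Prod.map (gridFloor N) (gridFloor N) p) - k p|) atTop (𝓝 0) := by
  have hgrid : Tendsto (fun N => Prod.map (gridFloor N) (gridFloor N) p) atTop (𝓝 p) :=
    (tendsto_gridFloor p.1).prodMk_nhds (tendsto_gridFloor p.2)
  have := tendsto_comp_of_continuousOn_inter_isOpen hU hk hp hgrid
    fun N => mk_mem_prod (gridFloor_mem_Icc N hp.2.1) (gridFloor_mem_Icc N hp.2.2)
  simpa using (this.sub_const (k p)).abs

theorem stmt8 (K : ℝ → ℝ → ℝ) (CK : ℝ)
    (hbound : ∀ u v, |K u v| ≤ CK)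
    (hmeas : Measurable fun p : ℝ × ℝ => K p.1 p.2)
    (hcond : ∀ ε > (0 : ℝ), ∃ A : Set (ℝ × ℝ),
      (∃ U : Set (ℝ × ℝ), IsOpen U ∧ A = U ∩ (Set.Icc 0 1 ×ˢ Set.Icc 0 1)) ∧
      UniformContinuousOn (fun p : ℝ × ℝ => K p.1 p.2) A ∧
      ∀ u ∈ Set.Icc (0 : ℝ) 1,
        volume {v ∈ Set.Icc (0 : ℝ) 1 | (u, v) ∉ A} ≤ ENNReal.ofReal ε) :
    Filter.Tendsto (fun N : ℕ =>
        ∫ u in Set.Icc (0 : ℝ) 1, ∫ v in Set.Icc (0 : ℝ) 1,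
          |K ((⌊(N : ℝ) * u⌋ : ℝ) / N) ((⌊(N : ℝ) * v⌋ : ℝ) / N) - K u v|)
      Filter.atTop (nhds 0) := by
  set Q := Icc (0 : ℝ) 1 ×ˢ Icc (0 : ℝ) 1
  have hQ : MeasurableSet Q := measurableSet_Icc.prod measurableSet_Icc
  have hQ_fin : volume Q ≠ ⊤ := (isCompact_Icc.prod isCompact_Icc).measure_lt_top.ne
  set k : ℝ × ℝ → ℝ := fun p => K p.1 p.2
  set g : ℕ → ℝ × ℝ → ℝ := fun N p => |k (Prod.map (gridFloor N) (gridFloor N) p) - k p|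
  have hg_meas (N : ℕ) : Measurable (g N) :=
    ((hmeas.comp ((measurable_gridFloor N).prodMap (measurable_gridFloor N))).sub hmeas).abs
  have hg_bound (N : ℕ) (p : ℝ × ℝ) : ‖g N p‖ ≤ 2 * CK := by
    rw [Real.norm_eq_abs, abs_abs, two_mul]
    exact (abs_sub _ _).trans (add_le_add (hbound _ _) (hbound _ _))
  have hg_iter (N : ℕ) : ∫ u in Icc (0 : ℝ) 1, ∫ v in Icc (0 : ℝ) 1,
      |K ((⌊(N : ℝ) * u⌋ : ℝ) / N) ((⌊(N : ℝ) * v⌋ : ℝ) / N) - K u v| = ∫ p in Q, g N p :=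
    (setIntegral_prod (g N) (Measure.integrableOn_of_bounded hQ_fin
      (hg_meas N).aestronglyMeasurable (ae_of_all _ (hg_bound N)))).symm
  have hg_lim : ∀ᵐ p ∂volume.restrict Q, Tendsto (g · p) atTop (𝓝 0) := by
    refine ae_restrict_of_forall_measure_diff_le hQ fun ε hε => ?_
    obtain ⟨A, ⟨U, hU, rfl⟩, hkA, hsec⟩ := hcond ε hε
    calc volume (Q \ {p | Tendsto (g · p) atTop (𝓝 0)})
        ≤ volume (Q \ (U ∩ Q)) := measure_mono (sdiff_subset_sdiff_right
          fun p hp => tendsto_abs_sub_gridFloor hU hkA.continuousOn hp)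
      _ ≤ volume (Icc (0 : ℝ) 1) * ENNReal.ofReal ε :=
          prod_le_of_sections_le (hQ.diff (hU.measurableSet.inter hQ)) measurableSet_Icc
            (fun p hp => ⟨hp.1.1, trivial⟩)
            fun u hu => (hsec u hu).trans' (measure_mono fun v hv => ⟨hv.1.2, hv.2⟩)
      _ = ENNReal.ofReal ε := by simp
  have := tendsto_integral_of_dominated_convergence (fun _ => 2 * CK)
    (fun N => (hg_meas N).aestronglyMeasurable) (integrableOn_const hQ_fin)
    (fun N => ae_of_all _ (hg_bound N)) hg_lim
  simp_rw [hg_iter]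
  simpa using this
end

section
/- Let 𝒰 be a compact metric space, μ ∈ P(𝒰), Σ finite, f : Σ×Σ → ℝ bounded, and K : 𝒰×𝒰 → ℝ bounded such that for every ε > 0 there is an open A_ε ⊆ 𝒰×𝒰 on which K is uniformly continuous and with μ({v : (u,v) ∉ A_ε}) ≤ ε for all u. Then the function F(x,m,u) = ∫_{𝒰×Σ} K(u,v) f(x,y) m(dv,dy) is jointly continuous on 𝒫_μ × 𝒰, where 𝒫_μ is the set of probability measures on 𝒰×Σ with 𝒰-marginal μ, endowed with the weak topology. -/
/-!
Write `F(m, u) = ∫ K(u, v) f(x, y) dm`. Since `f` is bounded and every `m ∈ 𝒫_μ` has first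
marginal `μ`, changing the kernel from `K(u, ·)` to any `a` moves `F(m, u)` by at most
`sup |f| · ‖K(u, ·) - a‖_{L¹(μ)}`, uniformly in `m ∈ 𝒫_μ`. The hypothesis on `K` makes
`u ↦ K(u, ·)` continuous into `L¹(μ)`, and `K(u₀, ·)` is an `L¹(μ)`-limit of bounded continuous
functions `h`, for which `m ↦ ∫ h(v) f(x, y) dm` is weakly continuous. So near `(m₀, u₀)` the
function `F` is uniformly close to a continuous function of `m`.
-/

open MeasureTheory Filter Topology

theorem abs_integral_mul_sub_integral_mul_le {X Y : Type*} [MeasurableSpace X]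
    [MeasurableSpace Y] {μ : Measure X} {m : Measure (X × Y)} (hm : m.map Prod.fst = μ)
    {a a' : X → ℝ} (ha : Integrable a μ) (ha' : Integrable a' μ) {b : Y → ℝ} (hb : Measurable b)
    {C : ℝ} (hbC : ∀ y, |b y| ≤ C) :
    |∫ p, a p.1 * b p.2 ∂m - ∫ p, a' p.1 * b p.2 ∂m| ≤ C * ∫ v, |a v - a' v| ∂μ := by
  subst hm
  have hmul : ∀ {g : X → ℝ}, Integrable g (m.map Prod.fst) →
      Integrable (fun p : X × Y => g p.1 * b p.2) m := fun hg =>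
    (hg.comp_measurable measurable_fst).mul_bdd (hb.comp measurable_snd).aestronglyMeasurable
      (ae_of_all _ fun p => hbC p.2)
  have hdiff : Integrable (fun v => |a v - a' v|) (m.map Prod.fst) := (ha.sub ha').abs
  rw [← integral_sub (hmul ha) (hmul ha')]
  calc ‖∫ p, (a p.1 * b p.2 - a' p.1 * b p.2) ∂m‖
      ≤ ∫ p, C * |a p.1 - a' p.1| ∂m := by
        refine norm_integral_le_of_norm_le ((hdiff.comp_measurable measurable_fst).const_mul C)
          (ae_of_all _ fun p => ?_)
        rw [Real.norm_eq_abs, ← sub_mul, abs_mul, mul_comm]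
        exact mul_le_mul_of_nonneg_right (hbC p.2) (abs_nonneg _)
    _ = C * ∫ v, |a v - a' v| ∂(m.map Prod.fst) := by
        rw [integral_const_mul, integral_map measurable_fst.aemeasurable hdiff.aestronglyMeasurable]

theorem integral_abs_le_of_abs_le_of_notMem {Y : Type*} [MeasurableSpace Y] {μ : Measure Y}
    [IsFiniteMeasure μ] {g : Y → ℝ} {B : Set Y} (hB : MeasurableSet B) {ε M : ℝ} (hε : 0 ≤ ε)
    (hgB : ∀ v ∉ B, |g v| ≤ ε) (hgM : ∀ v, |g v| ≤ M) :
    ∫ v, |g v| ∂μ ≤ ε * μ.real Set.univ + M * μ.real B := by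
  have hint : Integrable (B.indicator fun _ => M) μ := (integrable_const M).indicator hB
  calc ∫ v, |g v| ∂μ ≤ ∫ v, (ε + B.indicator (fun _ => M) v) ∂μ := by
        refine integral_mono_of_nonneg (ae_of_all _ fun v => abs_nonneg _)
          ((integrable_const ε).add hint) (ae_of_all _ fun v => ?_)
        by_cases hv : v ∈ B
        · simpa [hv] using (hgM v).trans (le_add_of_nonneg_left hε)
        · simpa [hv] using hgB v hv
    _ = ε * μ.real Set.univ + M * μ.real B := by
        rw [integral_add (integrable_const ε) hint, integral_const, integral_indicator_const _ hB,
          smul_eq_mul, smul_eq_mul, mul_comm, mul_comm (μ.real B)]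

theorem tendsto_integral_abs_sub_of_uniformContinuousOn {X Y : Type*} [PseudoMetricSpace X]
    [PseudoMetricSpace Y] [MeasurableSpace Y] [OpensMeasurableSpace Y] {μ : Measure Y}
    [IsFiniteMeasure μ] {K : X → Y → ℝ} {C : ℝ} (hKb : ∀ u v, |K u v| ≤ C)
    (hK : ∀ ε > (0 : ℝ), ∃ A : Set (X × Y), IsOpen A ∧
      UniformContinuousOn (fun p : X × Y => K p.1 p.2) A ∧
      ∀ u : X, μ {v | (u, v) ∉ A} ≤ ENNReal.ofReal ε)
    (u₀ : X) : Tendsto (fun u => ∫ v, |K u v - K u₀ v| ∂μ) (𝓝 u₀) (𝓝 0) := by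
  obtain ⟨C, hC, hKb⟩ : ∃ C' ≥ 0, ∀ u v, |K u v| ≤ C' :=
    ⟨max C 0, le_max_right _ _, fun u v => (hKb u v).trans (le_max_left _ _)⟩
  refine tendsto_order.2 ⟨fun a ha => Eventually.of_forall fun u =>
    ha.trans_le (integral_nonneg fun v => abs_nonneg _), fun ε' hε' => ?_⟩
  obtain ⟨ε, hε, hεε'⟩ := exists_pos_mul_lt hε' (μ.real Set.univ + 4 * C)
  obtain ⟨A, hA, hKA, hμA⟩ := hK ε hε
  obtain ⟨δ, hδ, hKδ⟩ := Metric.uniformContinuousOn_iff.1 hKA ε hε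
  filter_upwards [Metric.ball_mem_nhds u₀ hδ] with u hu
  set B := {v | (u, v) ∉ A} ∪ {v | (u₀, v) ∉ A}
  have hBmeas : MeasurableSet B :=
    ((hA.preimage (Continuous.prodMk_right u)).measurableSet.compl).union
      (hA.preimage (Continuous.prodMk_right u₀)).measurableSet.compl
  have hμB : μ.real B ≤ 2 * ε := by
    refine ENNReal.toReal_le_of_le_ofReal (by positivity) ?_
    calc μ B ≤ ENNReal.ofReal ε + ENNReal.ofReal ε :=
          (measure_union_le _ _).trans (add_le_add (hμA u) (hμA u₀))
      _ = ENNReal.ofReal (2 * ε) := by rw [← ENNReal.ofReal_add hε.le hε.le, two_mul]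
  have hgood : ∀ v ∉ B, |K u v - K u₀ v| ≤ ε := by
    intro v hv
    simp only [B, Set.mem_union, Set.mem_ofPred_eq, not_or, not_not] at hv
    have hdist : dist (u, v) (u₀, v) < δ := by simpa [Prod.dist_eq] using hu
    exact (hKδ _ hv.1 _ hv.2 hdist).le
  have hbad : ∀ v, |K u v - K u₀ v| ≤ 2 * C := fun v => by
    linarith [abs_sub (K u v) (K u₀ v), hKb u v, hKb u₀ v]
  calc ∫ v, |K u v - K u₀ v| ∂μ ≤ ε * μ.real Set.univ + 2 * C * μ.real B :=
        integral_abs_le_of_abs_le_of_notMem hBmeas hε.le hgood hbad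
    _ ≤ (μ.real Set.univ + 4 * C) * ε := by nlinarith
    _ < ε' := hεε'

theorem continuous_integral_comp_fst_mul_comp_snd {X Y : Type*} [TopologicalSpace X]
    [MeasurableSpace X] [TopologicalSpace Y] [MeasurableSpace Y] [OpensMeasurableSpace (X × Y)]
    (h : BoundedContinuousFunction X ℝ) {b : Y → ℝ} (hb : Continuous b) {C : ℝ}
    (hbC : ∀ y, |b y| ≤ C) :
    Continuous fun m : ProbabilityMeasure (X × Y) => ∫ p, h p.1 * b p.2 ∂(m : Measure (X × Y)) :=
  ProbabilityMeasure.continuous_integral_boundedContinuousFunction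
    (h.compContinuous ⟨Prod.fst, continuous_fst⟩ *
      .ofNormedAddCommGroup (fun p : X × Y => b p.2) (hb.comp continuous_snd) C
        fun p => (Real.norm_eq_abs _).trans_le (hbC p.2))

theorem stmt10_general {U : Type*} [MetricSpace U] [MeasurableSpace U] [BorelSpace U]
    {S : Type*} [Fintype S] [TopologicalSpace S] [DiscreteTopology S]
    [MeasurableSpace S] [BorelSpace S]
    (μ : Measure U) [IsProbabilityMeasure μ]
    (K : U → U → ℝ) (f : S → S → ℝ) (CK Cf : ℝ)
    (hKb : ∀ u v, |K u v| ≤ CK) (hfb : ∀ x y, |f x y| ≤ Cf)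
    (hKmeas : Measurable fun p : U × U => K p.1 p.2)
    (hcond : ∀ ε > (0 : ℝ), ∃ A : Set (U × U), IsOpen A ∧
      UniformContinuousOn (fun p : U × U => K p.1 p.2) A ∧
      ∀ u : U, μ {v | (u, v) ∉ A} ≤ ENNReal.ofReal ε)
    (x : S) :
    ContinuousOn (fun q : ProbabilityMeasure (U × S) × U =>
        ∫ p, K q.2 p.1 * f x p.2 ∂(q.1 : Measure (U × S)))
      ({m : ProbabilityMeasure (U × S) | (m : Measure (U × S)).map Prod.fst = μ}
        ×ˢ (Set.univ : Set U)) := by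
  rintro ⟨m₀, u₀⟩ hq
  have hCf : 0 ≤ Cf := (abs_nonneg _).trans (hfb x x)
  have hf : Continuous (f x) := continuous_of_discreteTopology
  have hK : ∀ u, Integrable (K u) μ := fun u =>
    .of_bound (hKmeas.comp (measurable_const.prodMk measurable_id)).aestronglyMeasurable CK
      (ae_of_all _ fun v => (Real.norm_eq_abs _).trans_le (hKb u v))
  refine continuousWithinAt_of_locally_uniform_approx_of_continuousWithinAt hq fun V hV => ?_
  obtain ⟨ε, hε, hεV⟩ := Metric.mem_uniformity_dist.1 hV
  obtain ⟨η, hη, hηε⟩ := exists_pos_mul_lt hε (2 * Cf)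
  obtain ⟨h, hKh, hh⟩ := (hK u₀).exists_boundedContinuous_integral_sub_le hη
  simp only [Real.norm_eq_abs] at hKh
  have hnear : ∀ᶠ u in 𝓝 u₀, ∫ v, |K u v - K u₀ v| ∂μ < η :=
    (tendsto_integral_abs_sub_of_uniformContinuousOn hKb hcond u₀).eventually_lt_const hη
  refine ⟨_,
    inter_mem self_mem_nhdsWithin (nhdsWithin_le_nhds (continuousAt_snd.eventually hnear)),
    fun q => ∫ p, h p.1 * f x p.2 ∂(q.1 : Measure (U × S)),
    ((continuous_integral_comp_fst_mul_comp_snd h hf (hfb x)).comp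
      continuous_fst).continuousWithinAt, ?_⟩
  rintro ⟨m, u⟩ ⟨⟨hm, -⟩, hu⟩
  refine hεV ((abs_sub_le _ (∫ p, K u₀ p.1 * f x p.2 ∂(m : Measure (U × S))) _).trans_lt ?_)
  calc _ ≤ Cf * η + Cf * η := add_le_add
        ((abs_integral_mul_sub_integral_mul_le hm (hK u) (hK u₀) hf.measurable (hfb x)).trans
          (mul_le_mul_of_nonneg_left hu.le hCf))
        ((abs_integral_mul_sub_integral_mul_le hm (hK u₀) hh hf.measurable (hfb x)).trans
          (mul_le_mul_of_nonneg_left hKh hCf))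
    _ < ε := by linarith

theorem stmt10 {U : Type*} [MetricSpace U] [CompactSpace U] [MeasurableSpace U] [BorelSpace U]
    {S : Type*} [Fintype S] [TopologicalSpace S] [DiscreteTopology S]
    [MeasurableSpace S] [BorelSpace S]
    (μ : Measure U) [IsProbabilityMeasure μ]
    (K : U → U → ℝ) (f : S → S → ℝ) (CK Cf : ℝ)
    (hKb : ∀ u v, |K u v| ≤ CK) (hfb : ∀ x y, |f x y| ≤ Cf)
    (hKmeas : Measurable fun p : U × U => K p.1 p.2)
    (hcond : ∀ ε > (0 : ℝ), ∃ A : Set (U × U), IsOpen A ∧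
      UniformContinuousOn (fun p : U × U => K p.1 p.2) A ∧
      ∀ u : U, μ {v | (u, v) ∉ A} ≤ ENNReal.ofReal ε)
    (x : S) :
    ContinuousOn (fun q : ProbabilityMeasure (U × S) × U =>
        ∫ p, K q.2 p.1 * f x p.2 ∂(q.1 : Measure (U × S)))
      ({m : ProbabilityMeasure (U × S) | (m : Measure (U × S)).map Prod.fst = μ}
        ×ˢ (Set.univ : Set U)) :=
  stmt10_general μ K f CK Cf hKb hfb hKmeas hcond x
end

section
/- Under the hypotheses of the previous continuity lemma (K, f bounded, K uniformly continuous off a μ-small closed set uniformly in u, 𝒰 compact metric), if m_n ∈ P(𝒰×Σ) converge weakly to m ∈ 𝒫_μ, then F(x,m_n,u) → F(x,m,u) uniformly in u ∈ 𝒰, where F(x,m,u) = ∫ K(u,v) f(x,y) m(dv,dy). -/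
/-!
Cut `K` off near the set where it is not continuous: thickened indicators of the closed set
`(𝒰 × 𝒰) \ A` give a continuous `w : 𝒰 × 𝒰 → [0, 1]`, equal to `1` off `A`, with
`∫ w(u, ·) dμ` small uniformly in `u` (pointwise by dominated convergence, uniformly by compactness
of `𝒰`, the integrals being monotone in the radius). Then `K (1 - w)` is continuous, and for a
continuous integrand `g(u, ·)` weak convergence is uniform in `u`: `u ↦ g(u, ·)` is continuous
into `C(𝒰 × Σ, ℝ)` and `(ν, φ) ↦ ∫ φ dν` is jointly continuous, being 1-Lipschitz in `φ`.
The remainder is at most `|CK| |Cf| ∫ w(u, v) m_n(dv, dy)`, which converges uniformly to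
`|CK| |Cf| ∫ w(u, ·) dμ` because `μ` is the first marginal of `m`.
-/

open MeasureTheory Filter Set Topology

theorem continuous_mul_of_continuousOn_of_eq_zero {X R : Type*} [TopologicalSpace X]
    [NormedRing R] {f g : X → R} {A : Set X} {C : ℝ} (hA : IsOpen A) (hf : ContinuousOn f A)
    (hfC : ∀ x, ‖f x‖ ≤ C) (hg : Continuous g) (hg0 : ∀ x ∉ A, g x = 0) :
    Continuous fun x => f x * g x := by
  refine continuous_iff_continuousAt.mpr fun x => ?_
  by_cases hx : x ∈ A
  · exact (hf.continuousAt (hA.mem_nhds hx)).mul hg.continuousAt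
  · rw [ContinuousAt, hg0 x hx, mul_zero]
    refine isBoundedUnder_le_mul_tendsto_zero ⟨C, eventually_map.mpr (.of_forall hfC)⟩ ?_
    simpa [hg0 x hx] using hg.tendsto x

theorem dist_integral_integral_mul_one_sub_le {X : Type*} [MeasurableSpace X] {ν : Measure X}
    [IsFiniteMeasure ν] {φ w : X → ℝ} {C : ℝ} (hφ : AEStronglyMeasurable φ ν)
    (hφC : ∀ x, |φ x| ≤ C) (hw : AEStronglyMeasurable w ν) (hw0 : ∀ x, 0 ≤ w x)
    (hw1 : ∀ x, w x ≤ 1) :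
    dist (∫ x, φ x ∂ν) (∫ x, φ x * (1 - w x) ∂ν) ≤ C * ∫ x, w x ∂ν := by
  have hφw : Integrable (fun x => φ x * w x) ν := .of_bound (hφ.mul hw) C (ae_of_all _ fun x => by
    rw [Real.norm_eq_abs, abs_mul, abs_of_nonneg (hw0 x)]
    exact (mul_le_of_le_one_right (abs_nonneg _) (hw1 x)).trans (hφC x))
  have hw_int : Integrable w ν := .of_bound hw 1 (ae_of_all _ fun x => by
    rw [Real.norm_of_nonneg (hw0 x)]; exact hw1 x)
  have hφ_int : Integrable φ ν := .of_bound hφ C (ae_of_all _ hφC)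
  calc dist (∫ x, φ x ∂ν) (∫ x, φ x * (1 - w x) ∂ν)
      = ‖∫ x, φ x * w x ∂ν‖ := by
        have h1w : (fun x => φ x * (1 - w x)) = fun x => φ x - φ x * w x := by ext; ring
        rw [dist_eq_norm, h1w, integral_sub hφ_int hφw, sub_sub_cancel]
    _ ≤ ∫ x, C * w x ∂ν := norm_integral_le_of_norm_le (hw_int.const_mul C)
        (ae_of_all _ fun x => by
          rw [Real.norm_eq_abs, abs_mul, abs_of_nonneg (hw0 x)]
          exact mul_le_mul_of_nonneg_right (hφC x) (hw0 x))
    _ = C * ∫ x, w x ∂ν := integral_const_mul C _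

theorem tendstoUniformly_of_forall_approx {ι α β : Type*} [PseudoMetricSpace β] {l : Filter ι}
    {F : ι → α → β} {f : α → β}
    (h : ∀ ε > 0, ∃ G : ι → α → β, ∃ g : α → β, TendstoUniformly G g l ∧
      (∀ᶠ n in l, ∀ a, dist (F n a) (G n a) ≤ ε) ∧ ∀ a, dist (f a) (g a) ≤ ε) :
    TendstoUniformly F f l := by
  refine Metric.tendstoUniformly_iff.mpr fun ε hε => ?_
  obtain ⟨G, g, hGg, hFG, hfg⟩ := h (ε / 3) (by positivity)
  filter_upwards [Metric.tendstoUniformly_iff.mp hGg (ε / 3) (by positivity), hFG]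
    with n hn hFGn a
  calc dist (f a) (F n a) ≤ dist (f a) (g a) + dist (g a) (G n a) + dist (G n a) (F n a) :=
        dist_triangle4 _ _ _ _
    _ < ε := by linarith [hfg a, hn a, hFGn a, dist_comm (G n a) (F n a)]

theorem exists_continuous_one_on_integral_lt {U V : Type*} [PseudoEMetricSpace U]
    [CompactSpace U] [PseudoEMetricSpace V] [MeasurableSpace V] [OpensMeasurableSpace V]
    (μ : Measure V) [IsFiniteMeasure μ] {B : Set (U × V)} (hB : IsClosed B) {δ : ℝ}
    (hδ : ∀ u, μ.real {v | (u, v) ∈ B} < δ) :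
    ∃ w : U × V → ℝ, Continuous w ∧ (∀ p, 0 ≤ w p) ∧ (∀ p, w p ≤ 1) ∧ (∀ p ∈ B, w p = 1) ∧
      ∀ u, ∫ v, w (u, v) ∂μ < δ := by
  have hr (k : ℕ) : (0 : ℝ) < 1 / (k + 1) := Nat.one_div_pos_of_nat
  set w : ℕ → U × V → ℝ := fun k p => thickenedIndicator (hr k) B p with hw
  have hwc (k : ℕ) : Continuous (w k) :=
    NNReal.continuous_coe.comp (thickenedIndicator (hr k) B).continuous
  have hw1 (k : ℕ) (p : U × V) : w k p ≤ 1 := by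
    simpa [hw] using thickenedIndicator_le_one (hr k) B p
  have hw_slice (k : ℕ) (u : U) : Continuous fun v => w k (u, v) :=
    (hwc k).comp (Continuous.prodMk_right u)
  have hw_bound (k : ℕ) (u : U) : ∀ v, ‖w k (u, v)‖ ≤ 1 := fun v => by
    rw [Real.norm_of_nonneg (NNReal.coe_nonneg _)]; exact hw1 k (u, v)
  have hw_int (k : ℕ) (u : U) : Integrable (fun v => w k (u, v)) μ :=
    .of_bound (hw_slice k u).aestronglyMeasurable 1 (ae_of_all _ (hw_bound k u))
  set ψ : ℕ → U → ℝ := fun k u => ∫ v, w k (u, v) ∂μ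
  have hψc (k : ℕ) : Continuous (ψ k) :=
    continuous_of_dominated (fun u => (hw_slice k u).aestronglyMeasurable)
      (fun u => ae_of_all _ (hw_bound k u)) (integrable_const 1)
      (ae_of_all _ fun v => (hwc k).comp (Continuous.prodMk_left v))
  have hψ_anti : Antitone ψ := fun k k' hkk' u =>
    integral_mono (hw_int k' u) (hw_int k u) fun v => NNReal.coe_le_coe.mpr <|
      thickenedIndicator_mono (hr k') (hr k) (by gcongr) B (u, v)
  have hψ_lim (u : U) : Tendsto (fun k => ψ k u) atTop (𝓝 (μ.real {v | (u, v) ∈ B})) := by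
    have hslice : MeasurableSet {v | (u, v) ∈ B} :=
      (hB.preimage (Continuous.prodMk_right u)).measurableSet
    rw [← integral_indicator_one hslice]
    refine tendsto_integral_of_dominated_convergence (fun _ => 1)
      (fun k => (hw_slice k u).aestronglyMeasurable) (integrable_const 1)
      (fun k => ae_of_all _ (hw_bound k u)) (ae_of_all _ fun v => ?_)
    have h := tendsto_pi_nhds.mp (thickenedIndicator_tendsto_indicator_closure hr
      tendsto_one_div_add_atTop_nhds_zero_nat B) (u, v)
    rw [hB.closure_eq] at h
    convert NNReal.tendsto_coe.mpr h using 2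
    by_cases hv : (u, v) ∈ B <;> simp [hv]
  obtain ⟨k, hk⟩ := isCompact_univ.elim_directed_cover (fun k => {u | ψ k u < δ})
    (fun k => isOpen_lt (hψc k) continuous_const)
    (fun u _ => mem_iUnion.mpr ((hψ_lim u).eventually_lt_const (hδ u)).exists)
    (Monotone.directed_le fun k k' hkk' u hu => (hψ_anti hkk' u).trans_lt hu)
  exact ⟨w k, hwc k, fun p => NNReal.coe_nonneg _, hw1 k,
    fun p hp => by simp only [hw, thickenedIndicator_one (hr k) B hp, NNReal.coe_one],
    fun u => hk (mem_univ u)⟩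

section WeakConvergence

variable {X : Type*} [TopologicalSpace X] [CompactSpace X] [MeasurableSpace X]
  [OpensMeasurableSpace X]

theorem lipschitzWith_integral_continuousMap (ν : Measure X) [IsProbabilityMeasure ν] :
    LipschitzWith 1 fun φ : C(X, ℝ) => ∫ x, φ x ∂ν := by
  refine LipschitzWith.of_dist_le_mul fun φ ψ => ?_
  have hint (φ : C(X, ℝ)) : Integrable φ ν := (BoundedContinuousFunction.mkOfCompact φ).integrable ν
  rw [NNReal.coe_one, one_mul, dist_eq_norm, ← integral_sub (hint φ) (hint ψ), dist_eq_norm]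
  have h := (BoundedContinuousFunction.mkOfCompact (φ - ψ)).norm_integral_le_norm ν
  rw [BoundedContinuousFunction.norm_mkOfCompact] at h
  simpa using h

theorem continuous_integral_continuousMap :
    Continuous fun q : ProbabilityMeasure X × C(X, ℝ) => ∫ x, q.2 x ∂(q.1 : Measure X) :=
  continuous_prod_of_continuous_lipschitzWith' _ 1
    (fun ν => lipschitzWith_integral_continuousMap (ν : Measure X)) fun φ =>
    ProbabilityMeasure.continuous_integral_boundedContinuousFunction
      (BoundedContinuousFunction.mkOfCompact φ)

theorem continuous_integral_of_continuous_uncurry {U : Type*} [TopologicalSpace U] {g : U × X → ℝ}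
    (hg : Continuous g) :
    Continuous fun q : ProbabilityMeasure X × U => ∫ x, g (q.2, x) ∂(q.1 : Measure X) :=
  continuous_integral_continuousMap.comp
    (continuous_fst.prodMk ((ContinuousMap.curry ⟨g, hg⟩).continuous.comp continuous_snd))

theorem tendstoUniformly_integral_of_tendsto {U : Type*} [TopologicalSpace U] [CompactSpace U]
    {g : U × X → ℝ} (hg : Continuous g) {ι : Type*} {l : Filter ι}
    {ν : ι → ProbabilityMeasure X} {ν₀ : ProbabilityMeasure X} (hν : Tendsto ν l (𝓝 ν₀)) :
    TendstoUniformly (fun n u => ∫ x, g (u, x) ∂(ν n : Measure X))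
      (fun u => ∫ x, g (u, x) ∂(ν₀ : Measure X)) l := by
  intro s hs
  obtain ⟨V, hV, hVs⟩ := isCompact_univ.mem_uniformity_of_prod
    (f := fun (ν : ProbabilityMeasure X) u => ∫ x, g (u, x) ∂(ν : Measure X))
    (continuous_integral_of_continuous_uncurry hg).continuousOn (mem_univ ν₀)
    (tendsto_swap_uniformity hs)
  rw [nhdsWithin_univ] at hV
  exact (hν.eventually hV).mono fun n hn u => hVs (ν n) hn u (mem_univ u)

end WeakConvergence

theorem tendstoUniformly_integral_of_forall_cutoff {X U : Type*} [TopologicalSpace X]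
    [CompactSpace X] [MeasurableSpace X] [OpensMeasurableSpace X] [TopologicalSpace U]
    [CompactSpace U] {ι : Type*} {l : Filter ι} {ν : ι → ProbabilityMeasure X}
    {ν₀ : ProbabilityMeasure X} (hν : Tendsto ν l (𝓝 ν₀)) {φ : U → X → ℝ} {C : ℝ}
    (hφ : ∀ u, Measurable (φ u)) (hφC : ∀ u x, |φ u x| ≤ C)
    (hcut : ∀ η > 0, ∃ w : U × X → ℝ, Continuous w ∧ (∀ q, 0 ≤ w q) ∧ (∀ q, w q ≤ 1) ∧
      Continuous (fun q => φ q.1 q.2 * (1 - w q)) ∧ ∀ u, ∫ x, w (u, x) ∂(ν₀ : Measure X) ≤ η) :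
    TendstoUniformly (fun n u => ∫ x, φ u x ∂(ν n : Measure X))
      (fun u => ∫ x, φ u x ∂(ν₀ : Measure X)) l := by
  refine tendstoUniformly_of_forall_approx fun ε hε => ?_
  obtain ⟨η, hη, hηε⟩ : ∃ η > 0, |C| * (2 * η) ≤ ε := ⟨ε / (2 * (|C| + 1)), by positivity, by
    field_simp; linarith⟩
  obtain ⟨w, hwc, hw0, hw1, hφw, hwν₀⟩ := hcut η hη
  have hw_slice (u : U) : Continuous fun x => w (u, x) := hwc.comp (Continuous.prodMk_right u)
  have hwν : ∀ᶠ n in l, ∀ u, ∫ x, w (u, x) ∂(ν n : Measure X) ≤ 2 * η := by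
    filter_upwards [Metric.tendstoUniformly_iff.mp (tendstoUniformly_integral_of_tendsto hwc hν)
      η hη] with n hn u
    linarith [hwν₀ u, (abs_sub_lt_iff.mp (Real.dist_eq _ _ ▸ hn u)).2]
  have hdist (ρ : Measure X) [IsProbabilityMeasure ρ] (u : U) :
      dist (∫ x, φ u x ∂ρ) (∫ x, φ u x * (1 - w (u, x)) ∂ρ) ≤ |C| * ∫ x, w (u, x) ∂ρ :=
    dist_integral_integral_mul_one_sub_le (hφ u).aestronglyMeasurable
      (fun x => (hφC u x).trans (le_abs_self C)) (hw_slice u).aestronglyMeasurable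
      (fun x => hw0 _) (fun x => hw1 _)
  refine ⟨_, _, tendstoUniformly_integral_of_tendsto hφw hν, hwν.mono fun n hn u => ?_, fun u => ?_⟩
  · exact (hdist _ u).trans ((mul_le_mul_of_nonneg_left (hn u) (abs_nonneg C)).trans hηε)
  · exact (hdist _ u).trans ((mul_le_mul_of_nonneg_left ((hwν₀ u).trans (by linarith))
      (abs_nonneg C)).trans hηε)

theorem stmt11 {U : Type*} [MetricSpace U] [CompactSpace U] [MeasurableSpace U] [BorelSpace U]
    {S : Type*} [Fintype S] [TopologicalSpace S] [DiscreteTopology S]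
    [MeasurableSpace S] [BorelSpace S]
    (μ : Measure U) [IsProbabilityMeasure μ]
    (K : U → U → ℝ) (f : S → S → ℝ) (CK Cf : ℝ)
    (hKb : ∀ u v, |K u v| ≤ CK) (hfb : ∀ x y, |f x y| ≤ Cf)
    (hKmeas : Measurable fun p : U × U => K p.1 p.2)
    (hcond : ∀ ε > (0 : ℝ), ∃ A : Set (U × U), IsOpen A ∧
      UniformContinuousOn (fun p : U × U => K p.1 p.2) A ∧
      ∀ u : U, μ {v | (u, v) ∉ A} ≤ ENNReal.ofReal ε)
    (mseq : ℕ → ProbabilityMeasure (U × S)) (m : ProbabilityMeasure (U × S))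
    (hconv : Filter.Tendsto mseq Filter.atTop (nhds m))
    (hmarg : (m : Measure (U × S)).map Prod.fst = μ)
    (x : S) :
    TendstoUniformly
      (fun n u => ∫ p, K u p.1 * f x p.2 ∂(mseq n : Measure (U × S)))
      (fun u => ∫ p, K u p.1 * f x p.2 ∂(m : Measure (U × S)))
      Filter.atTop := by
  refine tendstoUniformly_integral_of_forall_cutoff hconv (C := |CK| * |Cf|)
    (fun u => (hKmeas.comp (measurable_const.prodMk measurable_fst)).mul
      ((measurable_of_finite (f x)).comp measurable_snd))
    (fun u p => (abs_mul _ _).trans_le (mul_le_mul ((hKb _ _).trans (le_abs_self CK))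
      ((hfb _ _).trans (le_abs_self Cf)) (abs_nonneg _) (abs_nonneg _))) fun η hη => ?_
  obtain ⟨A, hA, hKA, hμA⟩ := hcond (η / 2) (by positivity)
  obtain ⟨w, hwc, hw0, hw1, hwA, hwμ⟩ := exists_continuous_one_on_integral_lt μ
    hA.isClosed_compl (δ := η) fun u =>
      (ENNReal.toReal_le_of_le_ofReal (by positivity) (hμA u)).trans_lt (by linarith)
  have hKw : Continuous fun q : U × U => K q.1 q.2 * (1 - w q) :=
    continuous_mul_of_continuousOn_of_eq_zero hA hKA.continuousOn
      (fun q => (hKb q.1 q.2).trans_eq' (Real.norm_eq_abs _)) (continuous_const.sub hwc)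
      fun q hq => by rw [hwA q hq, sub_self]
  have hpr : Continuous fun q : U × (U × S) => (q.1, q.2.1) :=
    continuous_fst.prodMk (continuous_fst.comp continuous_snd)
  refine ⟨fun q => w (q.1, q.2.1), hwc.comp hpr, fun _ => hw0 _, fun _ => hw1 _,
    ((hKw.comp hpr).mul ((continuous_of_discreteTopology (f := f x)).comp
      (continuous_snd.comp continuous_snd))).congr fun q => ?_, fun u => ?_⟩
  · simp only [Pi.mul_apply, Function.comp_apply]; ring
  · have h := integral_map (μ := (m : Measure (U × S))) measurable_fst.aemeasurable
      (hwc.comp (Continuous.prodMk_right u)).aestronglyMeasurable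
    rw [hmarg] at h
    exact (h ▸ hwμ u).le
end
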